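/- arXiv:2511.06484 — 5 statements merged into one kernel-verified Lean document; each statement's English description precedes it below -/
import Mathlib

section
/- Let A_0,…,A_q be linearly independent l×m matrices over ℂ, and let A be the tensor of type l×m×(q+1) whose slices are A_0,…,A_q, i.e., A(i,j,k) = (A_k)_{ij}. Assume that for every q-tuple (μ_1,…,μ_q) ∈ ℂ^q the matrix A_0 + Σ_{j=1}^q μ_j A_j has rank at least t. Then rk(A) ≥ q + t. -/
/-- A tensor of type `l × m × k` has rank one if it is nonzero and is an outer product
of three vectors. -/
def IsRankOne3 {l m k : ℕ} (T : Fin l → Fin m → Fin k → ℂ) : Prop :=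
  T ≠ 0 ∧ ∃ (u : Fin l → ℂ) (v : Fin m → ℂ) (w : Fin k → ℂ),
    ∀ i j s, T i j s = u i * v j * w s

/-- The rank of a tensor of type `l × m × k`: the least `r` such that `T` is a sum of `r`
rank-one tensors. -/
noncomputable def tensorRank3 {l m k : ℕ} (T : Fin l → Fin m → Fin k → ℂ) : ℕ :=
  sInf {r | ∃ f : Fin r → (Fin l → Fin m → Fin k → ℂ),
    (∀ s, IsRankOne3 (f s)) ∧ T = ∑ s, f s}

/-- Core lemma: substitution method induction. -/
theorem core (l m t : ℕ) : ∀ (q r : ℕ) (S : Finset (Fin r))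
    (A : Fin (q + 1) → Matrix (Fin l) (Fin m) ℂ),
    LinearIndependent ℂ A →
    (∀ μ : Fin q → ℂ, t ≤ (A 0 + ∑ j, μ j • A j.succ).rank) →
    ∀ (u : Fin r → Fin l → ℂ) (v : Fin r → Fin m → ℂ) (w : Fin r → Fin (q + 1) → ℂ),
    (∀ k, A k = ∑ s ∈ S, w s k • Matrix.of (fun i j => u s i * v s j)) →
    q + t ≤ S.card := by
  intro q
  induction q with
  | zero =>
    intro r S A hli hrank u v w hA
    simp only [Nat.zero_add]
    have h0 : t ≤ (A 0).rank := by
      have := hrank (fun j => 0)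
      simpa using this
    refine h0.trans ?_
    -- A 0 = U * V with width ↥S
    have hfac : A 0 = (Matrix.of (fun i (s : ↥S) => u s.1 i)) *
        (Matrix.of (fun (s : ↥S) j => w s.1 0 * v s.1 j)) := by
      ext i j
      rw [hA 0]
      simp only [Matrix.mul_apply, Matrix.sum_apply, Matrix.of_apply, ← Finset.sum_attach S,
        Matrix.smul_apply, smul_eq_mul]
      apply Finset.sum_congr rfl
      intro s _
      ring
    calc (A 0).rank ≤ (Matrix.of (fun i (s : ↥S) => u s.1 i)).rank := by
          rw [hfac]; exact Matrix.rank_mul_le_left _ _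
      _ ≤ Fintype.card ↥S := Matrix.rank_le_card_width _
      _ = S.card := Fintype.card_coe S
  | succ q ih =>
    intro r S A hli hrank u v w hA
    set last : Fin (q + 2) := Fin.last (q + 1) with hlast
    -- find s₀ with w s₀ last ≠ 0
    have hAlast : A last ≠ 0 := hli.ne_zero last
    have hex : ∃ s₀ ∈ S, w s₀ last ≠ 0 := by
      by_contra h
      push_neg at h
      apply hAlast
      rw [hA last]
      refine Finset.sum_eq_zero fun s hs => ?_
      rw [h s hs, zero_smul]
    obtain ⟨s₀, hs₀S, hws₀⟩ := hex
    set c : Fin (q + 2) → ℂ := fun k => w s₀ k / w s₀ last with hc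
    set B : Fin (q + 1) → Matrix (Fin l) (Fin m) ℂ :=
      fun k => A k.castSucc - c k.castSucc • A last with hBdef
    set w' : Fin r → Fin (q + 1) → ℂ :=
      fun s k => w s k.castSucc - c k.castSucc * w s last with hw'
    have hw's₀ : ∀ k, w' s₀ k = 0 := by
      intro k
      simp only [hw', hc]
      rw [div_mul_cancel₀ _ hws₀, sub_self]
    have hB : ∀ k, B k = ∑ s ∈ S.erase s₀,
        w' s k • Matrix.of (fun i j => u s i * v s j) := by
      intro k
      have : ∑ s ∈ S.erase s₀, w' s k • Matrix.of (fun i j => u s i * v s j)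
          = ∑ s ∈ S, w' s k • Matrix.of (fun i j => u s i * v s j) := by
        rw [Finset.sum_erase_eq_sub hs₀S, hw's₀ k, zero_smul, sub_zero]
      rw [this, hBdef]
      simp only [hw', sub_smul, mul_smul]
      rw [Finset.sum_sub_distrib, ← Finset.smul_sum, ← hA, ← hA]
    -- linear independence of B
    have hliB : LinearIndependent ℂ B := by
      rw [Fintype.linearIndependent_iff]
      intro g hg
      have hG := (Fintype.linearIndependent_iff.mp hli)
        (Fin.snoc g (-(∑ k, g k * c k.castSucc))) ?_
      · intro k
        have := hG k.castSucc
        rwa [Fin.snoc_castSucc] at this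
      · rw [Fin.sum_univ_castSucc]
        simp only [Fin.snoc_castSucc, Fin.snoc_last]
        rw [← hg]
        simp only [hBdef, smul_sub, Finset.sum_sub_distrib, smul_smul]
        rw [← Finset.sum_smul, neg_smul, ← sub_eq_add_neg]
    -- rank hypothesis for B
    have hrankB : ∀ μ : Fin q → ℂ, t ≤ (B 0 + ∑ j, μ j • B j.succ).rank := by
      intro μ
      have key : B 0 + ∑ j, μ j • B j.succ
          = A 0 + ∑ j' : Fin (q + 1),
            (Fin.snoc μ (-(c 0 + ∑ j, μ j * c j.succ.castSucc)) : Fin (q+1) → ℂ) j' • A j'.succ := by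
        rw [Fin.sum_univ_castSucc]
        simp only [Fin.snoc_castSucc, Fin.snoc_last, Fin.succ_castSucc, Fin.succ_last, ← hlast]
        simp only [hBdef, Fin.castSucc_zero, smul_sub, Finset.sum_sub_distrib, smul_smul]
        rw [← Finset.sum_smul, neg_smul, add_smul]
        abel
      rw [key]
      exact hrank _
    have hcard := ih r (S.erase s₀) B hliB hrankB u v w' hB
    rw [Finset.card_erase_of_mem hs₀S] at hcard
    have hpos : 1 ≤ S.card := Finset.card_pos.mpr ⟨s₀, hs₀S⟩
    omega

theorem exists_decomp {l m k : ℕ} (T : Fin l → Fin m → Fin k → ℂ) :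
    ∃ (r : ℕ) (f : Fin r → (Fin l → Fin m → Fin k → ℂ)),
      (∀ s, IsRankOne3 (f s)) ∧ T = ∑ s, f s := by
  classical
  set P := Fin l × Fin m × Fin k
  set a : P → ℂ := fun p => if T p.1 p.2.1 p.2.2 = 1 then 2 else T p.1 p.2.1 p.2.2 - 1 with ha
  set b : P → ℂ := fun p => T p.1 p.2.1 p.2.2 - a p with hb
  have ha0 : ∀ p, a p ≠ 0 := by
    intro p
    simp only [ha]
    split_ifs with h
    · norm_num
    · intro h0
      apply h
      have := sub_eq_zero.mp h0
      simpa using this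
  have hb0 : ∀ p, b p ≠ 0 := by
    intro p
    simp only [hb, ha]
    split_ifs with h
    · rw [h]; norm_num
    · intro h0
      simp only [sub_sub_cancel] at h0
      norm_num at h0
  set g : P × Fin 2 → (Fin l → Fin m → Fin k → ℂ) := fun x i j s =>
    (if x.2 = 0 then a x.1 else b x.1) *
      ((if i = x.1.1 then 1 else 0) * ((if j = x.1.2.1 then 1 else 0) *
        (if s = x.1.2.2 then 1 else 0))) with hg
  have hro : ∀ x, IsRankOne3 (g x) := by
    intro x
    constructor
    · intro h0
      have := congrFun (congrFun (congrFun h0 x.1.1) x.1.2.1) x.1.2.2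
      simp only [hg, if_pos rfl, Pi.zero_apply, mul_one] at this
      rcases Fin.exists_fin_two.mp ⟨x.2, rfl⟩ with h | h <;> rw [h] at this <;>
        simp at this
      · exact ha0 x.1 this
      · exact hb0 x.1 this
    · exact ⟨fun i => (if x.2 = 0 then a x.1 else b x.1) * (if i = x.1.1 then 1 else 0),
        fun j => if j = x.1.2.1 then 1 else 0,
        fun s => if s = x.1.2.2 then 1 else 0, fun i j s => by ring⟩
  have hsum : T = ∑ x : P × Fin 2, g x := by
    funext i j s
    rw [Finset.sum_apply, Finset.sum_apply, Finset.sum_apply]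
    rw [Fintype.sum_prod_type]
    have : ∀ p : P, ∑ x2 : Fin 2, g (p, x2) i j s
        = T p.1 p.2.1 p.2.2 * ((if i = p.1 then 1 else 0) * ((if j = p.2.1 then 1 else 0) *
          (if s = p.2.2 then 1 else 0))) := by
      intro p
      rw [Fin.sum_univ_two]
      simp only [hg]
      norm_num
      ring_nf
      split_ifs <;> ring
    rw [Finset.sum_congr rfl (fun p _ => this p)]
    rw [Fintype.sum_prod_type]
    simp [Fintype.sum_prod_type, mul_ite, ite_mul, Finset.sum_ite_eq, Finset.sum_ite_eq']
  refine ⟨Fintype.card (P × Fin 2), fun s => g ((Fintype.equivFin (P × Fin 2)).symm s),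
    fun s => hro _, ?_⟩
  rw [hsum, ← Equiv.sum_comp (Fintype.equivFin (P × Fin 2)).symm g]

/-- If `A_0, …, A_q` are linearly independent `l × m` matrices such that every
matrix `A_0 + Σ μ_j A_j` has rank at least `t`, then the tensor of type `l × m × (q + 1)`
with slices `A_0, …, A_q` has rank at least `q + t`. -/
theorem stmt_1 (l m q t : ℕ) (A : Fin (q + 1) → Matrix (Fin l) (Fin m) ℂ)
    (hli : LinearIndependent ℂ A)
    (hrank : ∀ μ : Fin q → ℂ, t ≤ (A 0 + ∑ j, μ j • A j.succ).rank) :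
    q + t ≤ tensorRank3 (fun i j k => A k i j) := by
  classical
  apply le_csInf
  · obtain ⟨r, f, hf, hsum⟩ := exists_decomp (fun i j k => A k i j)
    exact ⟨r, f, hf, hsum⟩
  · rintro r ⟨f, hf, hsum⟩
    choose u v w huvw using fun s => (hf s).2
    have hA : ∀ k, A k = ∑ s ∈ (Finset.univ : Finset (Fin r)),
        w s k • Matrix.of (fun i j => u s i * v s j) := by
      intro k
      ext i j
      have := congrFun (congrFun (congrFun hsum i) j) k
      rw [Finset.sum_apply, Finset.sum_apply, Finset.sum_apply] at this
      simp only [Matrix.sum_apply, Matrix.smul_apply, Matrix.of_apply, smul_eq_mul]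
      rw [this]
      exact Finset.sum_congr rfl fun s _ => by rw [huvw s i j k]; ring
    have := core l m t q r Finset.univ A hli hrank u v w hA
    simpa using this
end

section
/- Let n ≥ 3 and let H ∈ ℂ[x_1,…,x_b] be a nonzero form of degree n−1 not involving x_0, and set R = x_0·H ∈ ℂ[x_0,…,x_b]. Assume rk 𝓗_R(e_0) = 1, where e_0 = (1,0,…,0) ∈ ℂ^{b+1}. Then there exists an invertible linear change of the coordinates x_1,…,x_b (fixing x_0) after which R becomes x_0·x_1^{n-1}. -/
open MvPolynomial

/-- The tensor of `k`-th order partial derivatives of `F`, evaluated at `v`: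
its `(i_1, …, i_k)` entry is `(∂^k F / ∂x_{i_1} ⋯ ∂x_{i_k})(v)`. -/
noncomputable def HF {σ : Type*} [DecidableEq σ] (k : ℕ) (F : MvPolynomial σ ℂ) (v : σ → ℂ) :
    (Fin k → σ) → ℂ := fun idx =>
  eval v ((List.ofFn idx).foldl (fun p i => pderiv i p) F)

/-- A tensor of type `m × ⋯ × m` (`k` factors) has rank one if it is nonzero and is an
outer product of `k` vectors. -/
def IsRankOne {k m : ℕ} (T : (Fin k → Fin m) → ℂ) : Prop :=
  T ≠ 0 ∧ ∃ v : Fin k → Fin m → ℂ, ∀ j, T j = ∏ i, v i (j i)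

/-- The rank of a tensor: the least `r` such that `T` is a sum of `r` rank-one tensors. -/
noncomputable def tensorRank {k m : ℕ} (T : (Fin k → Fin m) → ℂ) : ℕ :=
  sInf {r | ∃ f : Fin r → ((Fin k → Fin m) → ℂ), (∀ s, IsRankOne (f s)) ∧ T = ∑ s, f s}


/-- The pullback of `F` under the linear substitution `x ↦ M · x`. -/
noncomputable def pullback {m : ℕ} (M : Matrix (Fin m) (Fin m) ℂ)
    (F : MvPolynomial (Fin m) ℂ) : MvPolynomial (Fin m) ℂ :=
  aeval (fun i => ∑ j, C (M i j) * X j) F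

/-!
Euler's identity shows that the entries of `𝓗_R(e₀)` are the (constant) `(n-1)`-th partial
derivatives of `H = ∂R/∂x₀`, so `𝓗_R(e₀)` is a symmetric tensor. A symmetric rank-one tensor is,
after extracting an `(n-1)`-th root, `(n-1)! · u ⊗ ⋯ ⊗ u`, which is also the tensor of `(n-1)`-th
derivatives of `ℓ^(n-1)` with `ℓ = ∑ uᵢ xᵢ`. A form of degree `N` is determined by its `N`-th
derivatives (Euler's identity again), so `H = ℓ^(n-1)`, and `∂H/∂x₀ = 0` forces `u₀ = 0`. It
remains to change coordinates, fixing `x₀`, so that `ℓ` becomes `x₁`.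
-/

namespace MvPolynomial

section CommRing
variable {R σ : Type*} [CommRing R]

noncomputable def iterPderiv (l : List σ) (p : MvPolynomial σ R) : MvPolynomial σ R :=
  l.foldl (fun q i => pderiv i q) p

@[simp] lemma iterPderiv_nil (p : MvPolynomial σ R) : iterPderiv [] p = p := rfl

lemma iterPderiv_cons (i : σ) (l : List σ) (p : MvPolynomial σ R) :
    iterPderiv (i :: l) p = iterPderiv l (pderiv i p) := rfl

lemma iterPderiv_zero (l : List σ) : iterPderiv l (0 : MvPolynomial σ R) = 0 := by
  induction l with
  | nil => rfl
  | cons i l ih => rw [iterPderiv_cons, map_zero, ih]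

lemma iterPderiv_C_mul (l : List σ) (a : R) (p : MvPolynomial σ R) :
    iterPderiv l (C a * p) = C a * iterPderiv l p := by
  induction l generalizing p with
  | nil => rfl
  | cons i l ih => rw [iterPderiv_cons, pderiv_C_mul, ih, iterPderiv_cons]

lemma pderiv_comm (i j : σ) (p : MvPolynomial σ R) :
    pderiv i (pderiv j p) = pderiv j (pderiv i p) := by
  classical
  have h : ⁅pderiv i, pderiv j⁆ = (0 : Derivation R (MvPolynomial σ R) (MvPolynomial σ R)) :=
    derivation_ext fun k => by
      rw [Derivation.commutator_apply, pderiv_X, pderiv_X]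
      simp [Pi.single_apply, apply_ite]
  simpa [Derivation.commutator_apply, sub_eq_zero] using congr($h p)

lemma iterPderiv_perm {l₁ l₂ : List σ} (h : l₁.Perm l₂) (p : MvPolynomial σ R) :
    iterPderiv l₁ p = iterPderiv l₂ p :=
  h.foldl_eq' (fun _ _ _ _ q => pderiv_comm _ _ q) p

lemma pderiv_iterPderiv (i : σ) (l : List σ) (p : MvPolynomial σ R) :
    pderiv i (iterPderiv l p) = iterPderiv l (pderiv i p) := by
  rw [← iterPderiv_cons, ← iterPderiv_perm (List.perm_append_singleton i l)]
  simp [iterPderiv]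

protected lemma IsHomogeneous.iterPderiv {p : MvPolynomial σ R} {n : ℕ} (h : p.IsHomogeneous n)
    (l : List σ) : (iterPderiv l p).IsHomogeneous (n - l.length) := by
  induction l generalizing p n with
  | nil => simpa
  | cons i l ih =>
    rw [iterPderiv_cons, List.length_cons, add_comm, ← Nat.sub_sub]
    exact ih h.pderiv

variable [Fintype σ]

noncomputable def linearForm (u : σ → R) : MvPolynomial σ R := ∑ i, C (u i) * X i

lemma isHomogeneous_linearForm (u : σ → R) : (linearForm u).IsHomogeneous 1 :=
  IsHomogeneous.sum _ _ _ fun j _ => isHomogeneous_C_mul_X (u j) j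

lemma pderiv_linearForm (u : σ → R) (i : σ) : pderiv i (linearForm u) = C (u i) := by
  classical
  simp [linearForm, pderiv_X, Pi.single_apply]

lemma linearForm_single [DecidableEq σ] (k : σ) : linearForm (Pi.single k 1 : σ → R) = X k := by
  simp [linearForm, Pi.single_apply]

lemma iterPderiv_linearForm_pow (u : σ → R) (l : List σ) (d : ℕ) :
    iterPderiv l (linearForm u ^ d) =
      C (d.descFactorial l.length * (l.map u).prod) * linearForm u ^ (d - l.length) := by
  induction l generalizing d with
  | nil => simp
  | cons i l ih =>
    cases d with
    | zero => simp [iterPderiv_cons, iterPderiv_zero]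
    | succ d =>
      have hpderiv : pderiv i (linearForm u ^ (d + 1)) = C ((d + 1) * u i) * linearForm u ^ d := by
        rw [pderiv_pow, pderiv_linearForm, Nat.add_sub_cancel, map_mul, ← map_natCast C]
        push_cast
        ring
      rw [iterPderiv_cons, hpderiv, iterPderiv_C_mul, ih, ← mul_assoc, ← C_mul]
      simp only [List.length_cons, Nat.succ_descFactorial_succ, List.map_cons, List.prod_cons,
        Nat.succ_sub_succ]
      push_cast
      congr 2
      ring

lemma IsHomogeneous.eval_single_eq_eval_pderiv [DecidableEq σ] {q : MvPolynomial σ R}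
    (hq : q.IsHomogeneous 1) (i : σ) :
    eval (Pi.single i 1) q = eval (Pi.single i 1) (pderiv i q) := by
  have := congr(eval (Pi.single i 1) $(hq.sum_X_mul_pderiv))
  simpa [Pi.single_apply, map_sum] using this.symm

end CommRing

section Field
variable {K σ : Type*} [Field K] [CharZero K] [Fintype σ]

lemma IsHomogeneous.eq_of_iterPderiv_ofFn_eq {p q : MvPolynomial σ K} {N : ℕ}
    (hp : p.IsHomogeneous N) (hq : q.IsHomogeneous N)
    (h : ∀ idx : Fin N → σ, iterPderiv (List.ofFn idx) p = iterPderiv (List.ofFn idx) q) :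
    p = q := by
  induction N generalizing p q with
  | zero => simpa using h Fin.elim0
  | succ N ih =>
    have hpd : ∀ i, pderiv i p = pderiv i q := fun i =>
      ih hp.pderiv hq.pderiv fun idx => by
        simpa [List.ofFn_succ, iterPderiv_cons] using h (Fin.cons i idx)
    have euler := hp.sum_X_mul_pderiv
    rw [Finset.sum_congr rfl fun i _ => by rw [hpd i], hq.sum_X_mul_pderiv] at euler
    exact (nsmul_right_injective (Nat.succ_ne_zero N) euler).symm

end Field
end MvPolynomial

section RankOne
variable {N m : ℕ} {T : (Fin N → Fin m) → ℂ}

lemma isRankOne_of_tensorRank_eq_one (h : tensorRank T = 1) : IsRankOne T := by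
  have hne : {r | ∃ f : Fin r → ((Fin N → Fin m) → ℂ),
      (∀ s, IsRankOne (f s)) ∧ T = ∑ s, f s}.Nonempty := by
    by_contra hempty
    rw [Set.not_nonempty_iff_eq_empty] at hempty
    simp [tensorRank, hempty] at h
  have hmem := Nat.sInf_mem hne
  rw [← tensorRank, h] at hmem
  obtain ⟨f, hf, hT⟩ := hmem
  simpa [hT] using hf 0

lemma mul_eq_mul_of_symm_of_eq_prod {v : Fin N → Fin m → ℂ} (hv : ∀ j, T j = ∏ k, v k (j k))
    (hsym : ∀ j (π : Equiv.Perm (Fin N)), T (j ∘ π) = T j) {js : Fin N → Fin m} (hjs : T js ≠ 0)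
    (k l : Fin N) (x y : Fin m) : v k x * v l y = v k y * v l x := by
  rcases eq_or_ne k l with rfl | hkl
  · ring
  -- Compare `T` at two indices that agree with `js` off `{k, l}` and differ by swapping `k, l`.
  set P := ∏ r ∈ ({k, l} : Finset (Fin N))ᶜ, v r (js r)
  have hsplit : ∀ x y, T (Function.update (Function.update js k x) l y) = v k x * v l y * P := by
    intro x y
    rw [hv, ← Finset.prod_mul_prod_compl {k, l}, Finset.prod_pair hkl]
    congr 1
    · simp [Function.update_of_ne hkl]
    · refine Finset.prod_congr rfl fun r hr => ?_
      simp only [Finset.mem_compl, Finset.mem_insert, Finset.mem_singleton, not_or] at hr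
      simp [Function.update_of_ne hr.1, Function.update_of_ne hr.2]
  have hswap : Function.update (Function.update js k x) l y ∘ Equiv.swap k l =
      Function.update (Function.update js k y) l x := by
    funext r
    rcases eq_or_ne r k with rfl | hrk
    · simp [Function.update_of_ne hkl]
    rcases eq_or_ne r l with rfl | hrl
    · simp [Function.update_of_ne hkl]
    simp [Equiv.swap_apply_of_ne_of_ne hrk hrl, Function.update_of_ne hrk,
      Function.update_of_ne hrl]
  have hP : P ≠ 0 := by
    rw [hv] at hjs
    exact Finset.prod_ne_zero_iff.mpr fun r _ =>
      Finset.prod_ne_zero_iff.mp hjs r (Finset.mem_univ r)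
  have := hsym (Function.update (Function.update js k x) l y) (Equiv.swap k l)
  rw [hswap, hsplit, hsplit] at this
  linear_combination (mul_right_cancel₀ hP this).symm

lemma IsRankOne.exists_eq_mul_prod_of_symm (hT : IsRankOne T)
    (hsym : ∀ j (π : Equiv.Perm (Fin N)), T (j ∘ π) = T j) (hN : 0 < N) {a : ℂ} (ha : a ≠ 0) :
    ∃ u : Fin m → ℂ, ∀ j, T j = a * ∏ k, u (j k) := by
  obtain ⟨hT0, v, hv⟩ := hT
  obtain ⟨js, hjs : T js ≠ 0⟩ := Function.ne_iff.mp hT0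
  set z : Fin N := ⟨0, hN⟩
  have hvz : v z (js z) ≠ 0 := by
    rw [hv] at hjs
    exact Finset.prod_ne_zero_iff.mp hjs z (Finset.mem_univ z)
  set c : Fin N → ℂ := fun k => v k (js z) / v z (js z)
  have hvc : ∀ k x, v k x = c k * v z x := fun k x => by
    simp only [c]
    field_simp
    linear_combination mul_eq_mul_of_symm_of_eq_prod hv hsym hjs k z x (js z)
  obtain ⟨t, ht⟩ := IsAlgClosed.exists_pow_nat_eq ((∏ k, c k) / a) hN
  refine ⟨fun x => t * v z x, fun j => ?_⟩
  rw [hv, Finset.prod_congr rfl fun k _ => hvc k (j k), Finset.prod_mul_distrib,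
    Finset.prod_mul_distrib, Finset.prod_const, Finset.card_univ, Fintype.card_fin, ht]
  field_simp
end RankOne

namespace Matrix
variable {K ι : Type*} [Field K] [Fintype ι] [DecidableEq ι]

lemma exists_isUnit_det_vecMul_eq_single {i₀ i₁ k : ι} (h₀₁ : i₀ ≠ i₁) (hk₀ : k ≠ i₀)
    {u : ι → K} (hu₀ : u i₀ = 0) (huk : u k ≠ 0) :
    ∃ M : Matrix ι ι K, IsUnit M.det ∧ Pi.single i₀ 1 ᵥ* M = Pi.single i₀ 1 ∧
      M *ᵥ Pi.single i₀ 1 = Pi.single i₀ 1 ∧ u ᵥ* M = Pi.single i₁ 1 := by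
  set σ := Equiv.swap i₁ k
  have hσ₀ : σ i₀ = i₀ := Equiv.swap_apply_of_ne_of_ne h₀₁ hk₀.symm
  -- `A⁻¹` is the required matrix: `A` fixes `e_{i₀}` on both sides and its row `i₁` is `u`.
  set A := (σ.permMatrix K).updateRow i₁ u
  have hu_sum : u = ∑ j, u (σ j) • σ.permMatrix K j := by
    ext x
    simp only [PEquiv.toMatrix_toPEquiv_apply, Finset.sum_apply, Pi.smul_apply, Pi.single_apply,
      smul_eq_mul, mul_ite, mul_one, mul_zero]
    rw [Equiv.sum_comp σ fun l => if x = l then u l else 0, Finset.sum_ite_eq,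
      if_pos (Finset.mem_univ x)]
  have hdet : IsUnit A.det := by
    have : A.det = u k * Equiv.Perm.sign σ := by
      simp only [A]
      nth_rw 1 [hu_sum]
      rw [det_updateRow_sum, det_permutation, smul_eq_mul, Equiv.swap_apply_left]
    rw [this, isUnit_iff_ne_zero]
    refine mul_ne_zero huk ?_
    rcases Int.units_eq_one_or (Equiv.Perm.sign σ) with h | h <;> simp [h]
  have hA₀ : Pi.single i₀ 1 ᵥ* A = Pi.single i₀ 1 := by
    rw [single_one_vecMul]
    ext x
    simp [A, updateRow_ne h₀₁, hσ₀, Pi.single_apply, eq_comm]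
  have hA₁ : Pi.single i₁ 1 ᵥ* A = u := by
    rw [single_one_vecMul]
    ext x
    simp [A]
  have hAcol : A *ᵥ Pi.single i₀ 1 = Pi.single i₀ 1 := by
    rw [mulVec_single_one]
    ext x
    rcases eq_or_ne x i₁ with rfl | hx
    · simp [A, hu₀, h₀₁]
    · have : σ x = i₀ ↔ x = i₀ := by
        rw [← σ.eq_symm_apply, σ.symm_apply_eq.mpr hσ₀.symm]
      simp [A, updateRow_ne hx, Pi.single_apply, this]
  refine ⟨A⁻¹, (isUnit_nonsing_inv_det_iff).mpr hdet, ?_, ?_, ?_⟩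
  · rw [← hA₀, vecMul_vecMul, mul_nonsing_inv A hdet, vecMul_one, hA₀]
  · rw [← hAcol, mulVec_mulVec, nonsing_inv_mul A hdet, one_mulVec, hAcol]
  · rw [← hA₁, vecMul_vecMul, mul_nonsing_inv A hdet, vecMul_one]

end Matrix

lemma HF_X_mul_eq_eval_iterPderiv {σ : Type*} [Fintype σ] [DecidableEq σ] {N : ℕ}
    {H : MvPolynomial σ ℂ} (hH : H.IsHomogeneous N) {i : σ} (hHi : pderiv i H = 0)
    (idx : Fin N → σ) :
    HF N (X i * H) (Pi.single i 1) idx = eval (Pi.single i 1) (iterPderiv (List.ofFn idx) H) := by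
  have hXH : (X i * H).IsHomogeneous (N + 1) := by
    simpa [add_comm] using (isHomogeneous_X ℂ i).mul hH
  have hlin := hXH.iterPderiv (List.ofFn idx)
  rw [List.length_ofFn, Nat.add_sub_cancel_left] at hlin
  have hpd : pderiv i (X i * H) = H := by simp [hHi]
  change eval _ (iterPderiv _ _) = _
  rw [hlin.eval_single_eq_eval_pderiv, pderiv_iterPderiv, hpd]

lemma exists_eq_linearForm_pow_of_isRankOne {m N : ℕ} (hN : 0 < N)
    {H : MvPolynomial (Fin m) ℂ} (hH : H.IsHomogeneous N) {i : Fin m} (hHi : pderiv i H = 0)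
    (hT : IsRankOne (HF N (X i * H) (Pi.single i 1))) :
    ∃ u : Fin m → ℂ, u i = 0 ∧ u ≠ 0 ∧ H = linearForm u ^ N := by
  set T := HF N (X i * H) (Pi.single i 1)
  have hT_eval : ∀ idx, T idx = eval (Pi.single i 1) (iterPderiv (List.ofFn idx) H) :=
    HF_X_mul_eq_eval_iterPderiv hH hHi
  have hTC : ∀ idx, iterPderiv (List.ofFn idx) H = C (T idx) := fun idx => by
    have h0 := hH.iterPderiv (List.ofFn idx)
    rw [List.length_ofFn, Nat.sub_self, ← totalDegree_zero_iff_isHomogeneous,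
      totalDegree_eq_zero_iff_eq_C] at h0
    rw [hT_eval, h0, eval_C]
  have hsym : ∀ j (π : Equiv.Perm (Fin N)), T (j ∘ π) = T j := fun j π => by
    rw [hT_eval, hT_eval, iterPderiv_perm (π.ofFn_comp_perm j)]
  obtain ⟨u, hu⟩ := hT.exists_eq_mul_prod_of_symm hsym hN (a := N.factorial)
    (Nat.cast_ne_zero.mpr N.factorial_ne_zero)
  have hHu : H = linearForm u ^ N := by
    refine hH.eq_of_iterPderiv_ofFn_eq (by simpa using (isHomogeneous_linearForm u).pow N)
      fun idx => ?_
    rw [hTC, hu, iterPderiv_linearForm_pow]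
    simp [List.map_ofFn, List.prod_ofFn, Nat.descFactorial_self]
  refine ⟨u, ?_, ?_, hHu⟩
  · have hT0 : T (fun _ => i) = 0 := by
      obtain ⟨N, rfl⟩ := Nat.exists_eq_add_of_lt hN
      have := hTC fun _ => i
      rw [List.ofFn_succ, iterPderiv_cons, hHi, iterPderiv_zero] at this
      exact C_eq_zero.mp this.symm
    simpa [hu, N.factorial_ne_zero, hN.ne'] using hT0
  · rintro rfl
    exact hT.1 (funext fun j => by simp [hu, hN.ne'])

open Matrix

lemma pullback_linearForm {m : ℕ} (M : Matrix (Fin m) (Fin m) ℂ) (u : Fin m → ℂ) :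
    pullback M (linearForm u) = linearForm (u ᵥ* M) := by
  simp only [pullback, linearForm, map_sum, map_mul, aeval_C, aeval_X, algebraMap_eq,
    Finset.mul_sum, vecMul, dotProduct, Finset.sum_mul]
  rw [Finset.sum_comm]
  simp only [← mul_assoc, ← C_mul]

theorem stmt_5_general (b n : ℕ) (hn : 3 ≤ n)
    (H : MvPolynomial (Fin (b + 1)) ℂ) (hH : H.IsHomogeneous (n - 1))
    (hHx0 : pderiv 0 H = 0)
    (hrk : tensorRank (HF (n - 1) (X 0 * H) (Pi.single 0 1)) = 1) :
    ∃ M : Matrix (Fin (b + 1)) (Fin (b + 1)) ℂ, IsUnit M.det ∧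
      M 0 0 = 1 ∧ (∀ j : Fin b, M 0 j.succ = 0 ∧ M j.succ 0 = 0) ∧
      pullback M (X 0 * H) = X 0 * X 1 ^ (n - 1) := by
  obtain ⟨u, hu0, hu, rfl⟩ := exists_eq_linearForm_pow_of_isRankOne (by omega) hH hHx0
    (isRankOne_of_tensorRank_eq_one hrk)
  obtain ⟨k, hk⟩ := Function.ne_iff.mp hu
  have hk0 : k ≠ 0 := fun h => hk (h ▸ hu0)
  have h01 : (0 : Fin (b + 1)) ≠ 1 := fun h => by
    obtain rfl : b = 0 := by simpa using Fin.zero_eq_one_iff.mp h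
    exact hk0 (Fin.fin_one_eq_zero k)
  obtain ⟨M, hM, hrow, hcol, hvec⟩ := Matrix.exists_isUnit_det_vecMul_eq_single h01 hk0 hu0 hk
  refine ⟨M, hM, by simpa using congrFun hrow 0, fun j => ⟨?_, ?_⟩, ?_⟩
  · simpa [Fin.succ_ne_zero] using congrFun hrow j.succ
  · simpa [Fin.succ_ne_zero] using congrFun hcol j.succ
  · rw [← linearForm_single 0, ← linearForm_single 1, pullback, map_mul, map_pow]
    change pullback M _ * pullback M _ ^ _ = _
    rw [pullback_linearForm, pullback_linearForm, hrow, hvec]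

/-- Let `n ≥ 3` and let `H` be a nonzero form of degree `n - 1` in
`x_1, …, x_b` (not involving `x_0`), and set `R = x_0 · H`. If `rk 𝓗_R(e_0) = 1`, then
there is an invertible linear change of the coordinates `x_1, …, x_b` (fixing `x_0`) after
which `R` becomes `x_0 · x_1^{n-1}`. -/
theorem stmt_5 (b n : ℕ) (hn : 3 ≤ n) (hb : 1 ≤ b)
    (H : MvPolynomial (Fin (b + 1)) ℂ) (hH : H.IsHomogeneous (n - 1))
    (hH0 : H ≠ 0) (hHx0 : pderiv 0 H = 0)
    (hrk : tensorRank (HF (n - 1) (X 0 * H) (Pi.single 0 1)) = 1) :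
    ∃ M : Matrix (Fin (b + 1)) (Fin (b + 1)) ℂ, IsUnit M.det ∧
      M 0 0 = 1 ∧ (∀ j : Fin b, M 0 j.succ = 0 ∧ M j.succ 0 = 0) ∧
      pullback M (X 0 * H) = X 0 * X 1 ^ (n - 1) :=
  stmt_5_general b n hn H hH hHx0 hrk
end

section
/- Let n ≥ 3, let a, λ ∈ ℂ with λ ≠ 0, and let F = a·x_0^n + λ·x_0^{n-1}x_1 + G(x_1,…,x_b) ∈ ℂ[x_0,…,x_b], where G is a form of degree n not involving x_0. Then rk 𝓗_F(e_0) ≥ 2, where e_0 = (1,0,…,0) ∈ ℂ^{b+1}. -/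
open MvPolynomial

/-!
An `(n-1)`-fold derivative of a form of degree `n` is a linear form, and its value at `e₀` is its
`x₀`-coefficient; as `G` does not involve `x₀`, only `a x₀ⁿ + λ x₀ⁿ⁻¹ x₁` contributes. On the slice
of indices `(i, j, 0, …, 0)` the tensor `𝓗_F(e₀)` therefore has entries `λ (n-1)!` at `(1,0)` and
`(0,1)` but `0` at `(1,1)`. A rank-one tensor `∏ v_l(j_l)` has vanishing `2 × 2` minors in any two
slots, so `𝓗_F(e₀)` is neither of rank one nor zero.
-/

theorem isRankOne_single {k m : ℕ} [NeZero k] (j : Fin k → Fin m) {c : ℂ} (hc : c ≠ 0) :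
    IsRankOne (Pi.single j c) := by
  refine ⟨fun h => hc (by simpa using congrFun h j),
    fun i => Pi.single (j i) (if i = 0 then c else 1), fun x => ?_⟩
  by_cases hx : x = j
  · subst hx
    simp
  · obtain ⟨i, hi⟩ := Function.ne_iff.mp hx
    rw [Pi.single_eq_of_ne hx, Finset.prod_eq_zero (Finset.mem_univ i)]
    exact Pi.single_eq_of_ne hi _

theorem exists_sum_isRankOne {k m : ℕ} [NeZero k] (T : (Fin k → Fin m) → ℂ) :
    ∃ (r : ℕ) (f : Fin r → (Fin k → Fin m) → ℂ), (∀ s, IsRankOne (f s)) ∧ T = ∑ s, f s := by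
  classical
  set S := Finset.univ.filter (T · ≠ 0) with hS
  have hT : ∑ j ∈ S, Pi.single j (T j) = T := by
    rw [hS, Finset.sum_filter_of_ne fun j _ => mt fun h => by rw [h, Pi.single_zero]]
    exact Finset.univ_sum_single T
  refine ⟨S.card, fun s => Pi.single (S.equivFin.symm s : Fin k → Fin m) (T (S.equivFin.symm s)),
    fun s => isRankOne_single _ (Finset.mem_filter.mp (S.equivFin.symm s).2).2, ?_⟩
  calc T = ∑ j : S, Pi.single j.1 (T j) := hT.symm.trans (Finset.sum_coe_sort S _).symm
    _ = _ := (Fintype.sum_equiv S.equivFin.symm _ _ fun _ => rfl).symm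

theorem IsRankOne.apply_cons_cons_mul {k m : ℕ} {T : (Fin (k + 2) → Fin m) → ℂ}
    (hT : IsRankOne T) (a a' b b' : Fin m) (t : Fin k → Fin m) :
    T (Fin.cons a (Fin.cons b t)) * T (Fin.cons a' (Fin.cons b' t)) =
      T (Fin.cons a (Fin.cons b' t)) * T (Fin.cons a' (Fin.cons b t)) := by
  obtain ⟨-, v, hv⟩ := hT
  simp only [hv, Fin.prod_univ_succ, Fin.cons_zero, Fin.cons_succ]
  ring

theorem two_le_tensorRank_of_apply_cons_cons {k m : ℕ} {T : (Fin (k + 2) → Fin m) → ℂ}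
    {a a' b b' : Fin m} {t : Fin k → Fin m} (h : T (Fin.cons a (Fin.cons b t)) = 0)
    (hb' : T (Fin.cons a (Fin.cons b' t)) ≠ 0) (ha' : T (Fin.cons a' (Fin.cons b t)) ≠ 0) :
    2 ≤ tensorRank T := by
  -- `sInf ∅ = 0`, so the set of decompositions has to be shown nonempty
  refine le_csInf (exists_sum_isRankOne T) ?_
  rintro r ⟨f, hf, rfl⟩
  by_contra! hr
  interval_cases r
  · simp at hb'
  · rw [Fin.sum_univ_one] at h hb' ha'
    have := (hf 0).apply_cons_cons_mul a a' b b' t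
    rw [h, zero_mul] at this
    exact mul_ne_zero hb' ha' this.symm

namespace MvPolynomial

variable {R σ τ : Type*} [CommSemiring R]

noncomputable def iteratedPDeriv : List σ → MvPolynomial σ R →ₗ[R] MvPolynomial σ R
  | [] => LinearMap.id
  | i :: L => iteratedPDeriv L ∘ₗ (pderiv i).toLinearMap

@[simp]
theorem iteratedPDeriv_nil (φ : MvPolynomial σ R) : iteratedPDeriv [] φ = φ := rfl

@[simp]
theorem iteratedPDeriv_cons (i : σ) (L : List σ) (φ : MvPolynomial σ R) :
    iteratedPDeriv (i :: L) φ = iteratedPDeriv L (pderiv i φ) := rfl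

theorem foldl_pderiv_eq_iteratedPDeriv (L : List σ) (φ : MvPolynomial σ R) :
    L.foldl (fun p i => pderiv i p) φ = iteratedPDeriv L φ := by
  induction L generalizing φ with
  | nil => rfl
  | cons i L ih => exact ih _

theorem iteratedPDeriv_replicate_X_pow (i : σ) (t s : ℕ) :
    iteratedPDeriv (List.replicate t i) (X i ^ s : MvPolynomial σ R) =
      s.descFactorial t • X i ^ (s - t) := by
  induction t generalizing s with
  | zero => simp
  | succ t ih =>
    rw [List.replicate_succ, iteratedPDeriv_cons, pderiv_pow, pderiv_X_self, mul_one,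
      ← nsmul_eq_mul, map_nsmul, ih, smul_smul, Nat.sub_sub, add_comm 1 t]
    cases s with
    | zero => simp
    | succ s => rw [Nat.succ_descFactorial_succ, Nat.add_sub_cancel]

theorem exists_iteratedPDeriv_rename {f : τ → σ} (hf : Function.Injective f) (L : List σ)
    {G : MvPolynomial τ R} {d : ℕ} (hG : G.IsHomogeneous d) :
    ∃ H : MvPolynomial τ R, H.IsHomogeneous (d - L.length) ∧
      iteratedPDeriv L (rename f G) = rename f H := by
  induction L generalizing G d with
  | nil => exact ⟨G, hG, rfl⟩
  | cons i L ih =>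
    rw [iteratedPDeriv_cons, List.length_cons, add_comm, ← Nat.sub_sub]
    by_cases hi : i ∈ Set.range f
    · obtain ⟨j, rfl⟩ := hi
      rw [pderiv_rename hf]
      exact ih hG.pderiv
    · have : pderiv i (rename f G) = 0 := by
        classical
        refine pderiv_eq_zero_of_notMem_vars fun hmem => hi ?_
        obtain ⟨j, -, rfl⟩ := Finset.mem_image.mp (vars_rename f G hmem)
        exact Set.mem_range_self j
      exact ⟨0, isHomogeneous_zero _ _ _, by rw [this, map_zero, map_zero]⟩

theorem eval_iteratedPDeriv_rename_eq_zero {f : τ → σ} (hf : Function.Injective f)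
    {v : σ → R} (hv : ∀ t, v (f t) = 0) {G : MvPolynomial τ R} {d : ℕ} (hG : G.IsHomogeneous d)
    {L : List σ} (hL : L.length < d) : eval v (iteratedPDeriv L (rename f G)) = 0 := by
  obtain ⟨H, hH, e⟩ := exists_iteratedPDeriv_rename hf L hG
  rw [e, eval_rename, show v ∘ f = 0 from _root_.funext hv, eval_zero, constantCoeff_eq]
  exact hH.coeff_eq_zero (by simp; omega)

section Evaluation

variable [DecidableEq σ]

theorem eval_iteratedPDeriv_replicate_X_pow_succ (x : σ) (t : ℕ) :
    eval (Pi.single x 1) (iteratedPDeriv (List.replicate t x) (X x ^ (t + 1) : MvPolynomial σ R)) =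
      (t + 1).factorial := by
  rw [iteratedPDeriv_replicate_X_pow, Nat.add_sub_cancel_left, pow_one, map_nsmul, eval_X,
    Pi.single_eq_same, nsmul_one]
  have := Nat.factorial_mul_descFactorial (Nat.le_add_right t 1)
  rw [Nat.add_sub_cancel_left, Nat.factorial_one, one_mul] at this
  rw [this]

variable {x y : σ} (a c : R) (m : ℕ)

theorem eval_iteratedPDeriv_y_y (hxy : x ≠ y) :
    eval (Pi.single x 1) (iteratedPDeriv (y :: y :: List.replicate m x)
      (C a * X x ^ (m + 3) + C c * X x ^ (m + 2) * X y)) = 0 := by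
  simp [pderiv_X_of_ne hxy]

theorem eval_iteratedPDeriv_y_x (hxy : x ≠ y) :
    eval (Pi.single x 1) (iteratedPDeriv (y :: x :: List.replicate m x)
      (C a * X x ^ (m + 3) + C c * X x ^ (m + 2) * X y)) = c * (m + 2).factorial := by
  have hderiv : pderiv y (C a * X x ^ (m + 3) + C c * X x ^ (m + 2) * X y) =
      C c * X x ^ (m + 2) := by
    simp [pderiv_X_of_ne hxy]
  rw [iteratedPDeriv_cons, hderiv, ← List.replicate_succ, C_mul', map_smul, smul_eval,
    eval_iteratedPDeriv_replicate_X_pow_succ]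

theorem eval_iteratedPDeriv_x_y (hxy : x ≠ y) :
    eval (Pi.single x 1) (iteratedPDeriv (x :: y :: List.replicate m x)
      (C a * X x ^ (m + 3) + C c * X x ^ (m + 2) * X y)) = c * (m + 2).factorial := by
  have hderiv : pderiv y (pderiv x (C a * X x ^ (m + 3) + C c * X x ^ (m + 2) * X y)) =
      C (c * (m + 2 : ℕ)) * X x ^ (m + 1) := by
    simp only [map_add, pderiv_mul, pderiv_C, pderiv_pow, pderiv_X_self, pderiv_X_of_ne hxy,
      pderiv_X_of_ne hxy.symm, Derivation.map_natCast, mul_zero, zero_mul, add_zero, zero_add,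
      mul_one, map_mul, map_natCast]
    rw [mul_assoc]
    rfl
  rw [iteratedPDeriv_cons, iteratedPDeriv_cons, hderiv, C_mul', map_smul, smul_eval,
    eval_iteratedPDeriv_replicate_X_pow_succ, Nat.factorial_succ (m + 1)]
  push_cast
  ring

end Evaluation

end MvPolynomial

theorem HF_cons_cons {σ : Type*} [DecidableEq σ] {k : ℕ} (F : MvPolynomial σ ℂ) (v : σ → ℂ)
    (i j : σ) (t : Fin k → σ) :
    HF (k + 2) F v (Fin.cons i (Fin.cons j t)) =
      eval v (iteratedPDeriv (i :: j :: List.ofFn t) F) := by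
  rw [HF, List.ofFn_cons, List.ofFn_cons, foldl_pderiv_eq_iteratedPDeriv]

/-- Let `n ≥ 3`, `λ ≠ 0`, and
`F = a·x_0^n + λ·x_0^{n-1}·x_1 + G(x_1, …, x_b)` where `G` is a form of degree `n` not
involving `x_0`. Then `rk 𝓗_F(e_0) ≥ 2`. -/
theorem stmt_9 (b n : ℕ) (hn : 3 ≤ n) (hb : 1 ≤ b) (a lam : ℂ) (hlam : lam ≠ 0)
    (G : MvPolynomial (Fin b) ℂ) (hG : G.IsHomogeneous n) :
    2 ≤ tensorRank (HF (n - 1)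
      (C a * X 0 ^ n + C lam * X 0 ^ (n - 1) * X 1 + rename Fin.succ G)
      (Pi.single (0 : Fin (b + 1)) 1)) := by
  obtain ⟨m, rfl⟩ : ∃ m, n = m + 3 := ⟨n - 3, by omega⟩
  rw [show m + 3 - 1 = m + 2 from rfl]
  have h01 : (0 : Fin (b + 1)) ≠ 1 := by
    simp [Fin.ext_iff, Nat.mod_eq_of_lt (show 1 < b + 1 by omega)]
  set P : MvPolynomial (Fin (b + 1)) ℂ := C a * X 0 ^ (m + 3) + C lam * X 0 ^ (m + 2) * X 1
  have hT : ∀ i j : Fin (b + 1), HF (m + 2) (P + rename Fin.succ G) (Pi.single 0 1)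
      (Fin.cons i (Fin.cons j fun _ => 0)) =
        eval (Pi.single 0 1) (iteratedPDeriv (i :: j :: List.replicate m 0) P) := by
    intro i j
    have hG0 : eval (Pi.single 0 1)
        (iteratedPDeriv (i :: j :: List.replicate m 0) (rename Fin.succ G)) = 0 :=
      eval_iteratedPDeriv_rename_eq_zero (Fin.succ_injective b)
        (fun k => Pi.single_eq_of_ne (Fin.succ_ne_zero k) _) hG (by simp)
    rw [HF_cons_cons, List.ofFn_const, map_add, map_add, hG0, add_zero]
  have hlam' : lam * (m + 2).factorial ≠ 0 :=
    mul_ne_zero hlam (Nat.cast_ne_zero.mpr (Nat.factorial_ne_zero _))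
  refine two_le_tensorRank_of_apply_cons_cons (a := 1) (b := 1) (a' := 0) (b' := 0)
    (t := fun _ => 0) ?_ ?_ ?_
  · rw [hT, eval_iteratedPDeriv_y_y _ _ _ h01]
  · rwa [hT, eval_iteratedPDeriv_y_x _ _ _ h01]
  · rwa [hT, eval_iteratedPDeriv_x_y _ _ _ h01]
end

section
/- Let n ≥ 4, let a ∈ ℂ, let L be a linear form in x_1,…,x_b, let q be an integer with 1 ≤ q ≤ b, and let F = (a/n!)·x_0^n + (1/(n-1)!)·x_0^{n-1}·L(x_1,…,x_b) + (1/(2(n-2)!))·x_0^{n-2}·(x_1^2+⋯+x_q^2) + G(x_1,…,x_b) ∈ ℂ[x_0,…,x_b], where G is a form of degree n not involving x_0. Then rk 𝓗_F(e_0) ≥ 2q, where e_0 = (1,0,…,0) ∈ ℂ^{b+1}. -/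
/-
The entry of `𝓗_F(e₀)` at a multi-index is, up to a nonzero factorial, the coefficient in `F`
of `x₀` times the monomial of that multi-index. Hence for each `1 ≤ t ≤ q` the entries with two
indices `t` and the rest `0` are nonzero (they come from `x₀^(n-2) x_t²`), those with three
indices `t` vanish (as `n ≥ 4`, `x₀^(n-3) x_t³` has coefficient `0`), and every entry involving
two different nonzero indices vanishes.

Such a tensor has rank at least `2q` by the substitution method. Given `t`, take a minimal
decomposition and apply to mode `0` a linear map killing the mode-`0` factor of a rank-one term
that sees a nonzero entry with index `t` there; this lowers the rank by one, and so does the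
analogous map in mode `1`. Projecting away from `e_t` in every mode cannot raise the rank, and
since no entry mixes `t` with another nonzero index, what remains has the same structure for the
other values of `t`.
-/

open MvPolynomial

section Decomposition

open Finset

variable {K M : ℕ}

def outerProduct (v : Fin K → Fin M → ℂ) : (Fin K → Fin M) → ℂ := fun idx => ∏ i, v i (idx i)

theorem exists_sum_isRankOne_of_eq_sum_outerProduct {ι : Type*} (S : Finset ι)
    (w : ι → Fin K → Fin M → ℂ) {T : (Fin K → Fin M) → ℂ}
    (hT : T = ∑ s ∈ S, outerProduct (w s)) :
    ∃ r ≤ #S, ∃ f : Fin r → ((Fin K → Fin M) → ℂ), (∀ s, IsRankOne (f s)) ∧ T = ∑ s, f s := by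
  classical
  set S' := S.filter fun s => outerProduct (w s) ≠ 0
  refine ⟨#S', card_filter_le _ _, fun r => outerProduct (w (S'.equivFin.symm r)),
    fun r => ⟨(mem_filter.mp (S'.equivFin.symm r).2).2, w _, fun _ => rfl⟩, ?_⟩
  rw [hT, ← sum_filter_ne_zero, ← sum_coe_sort S']
  exact (Equiv.sum_comp S'.equivFin.symm fun s => outerProduct (w s)).symm

theorem tensorRank_le_card {ι : Type*} (S : Finset ι) (w : ι → Fin K → Fin M → ℂ)
    {T : (Fin K → Fin M) → ℂ} (hT : T = ∑ s ∈ S, outerProduct (w s)) : tensorRank T ≤ #S := by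
  obtain ⟨r, hr, hmem⟩ := exists_sum_isRankOne_of_eq_sum_outerProduct S w hT
  exact (Nat.sInf_le hmem).trans hr

theorem eq_sum_outerProduct_single [NeZero K] (T : (Fin K → Fin M) → ℂ) :
    T = ∑ j, outerProduct fun i x => (if i = 0 then T j else 1) * if x = j i then 1 else 0 := by
  ext idx
  rw [Finset.sum_apply, sum_eq_single idx]
  · simp [outerProduct]
  · intro j _ hj
    obtain ⟨i, hi⟩ := Function.ne_iff.mp hj
    exact prod_eq_zero (mem_univ i) (by simp [Ne.symm hi])
  · simp

theorem exists_eq_sum_outerProduct [NeZero K] (T : (Fin K → Fin M) → ℂ) :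
    ∃ w : Fin (tensorRank T) → Fin K → Fin M → ℂ, T = ∑ s, outerProduct (w s) := by
  obtain ⟨r, -, hr⟩ := exists_sum_isRankOne_of_eq_sum_outerProduct univ _
    (eq_sum_outerProduct_single T)
  obtain ⟨f, hf, hT⟩ := Nat.sInf_mem (s := {r | ∃ f : Fin r → ((Fin K → Fin M) → ℂ),
    (∀ s, IsRankOne (f s)) ∧ T = ∑ s, f s}) ⟨r, hr⟩
  choose w hw using fun s => (hf s).2
  exact ⟨w, hT.trans (sum_congr rfl fun s _ => funext (hw s))⟩

end Decomposition

section Substitution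

open Finset Function

variable {K M : ℕ}

/-- Applies to mode `p` the map `u ↦ u - u t • μ` followed by erasing coordinate `t`; when
`μ t = 1` it annihilates exactly the multiples of `μ`. -/
def tensorSubstitute (p : Fin K) (t : Fin M) (μ : Fin M → ℂ) :
    ((Fin K → Fin M) → ℂ) →ₗ[ℂ] ((Fin K → Fin M) → ℂ) where
  toFun T idx := if idx p = t then 0 else T idx - μ (idx p) * T (update idx p t)
  map_add' T T' := by ext idx; dsimp only [Pi.add_apply]; split_ifs <;> ring
  map_smul' c T := by
    ext idx; dsimp only [Pi.smul_apply, smul_eq_mul, RingHom.id_apply]; split_ifs <;> ring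

theorem tensorSubstitute_apply (p : Fin K) (t : Fin M) (μ : Fin M → ℂ)
    (T : (Fin K → Fin M) → ℂ) (idx : Fin K → Fin M) :
    tensorSubstitute p t μ T idx =
      if idx p = t then 0 else T idx - μ (idx p) * T (update idx p t) :=
  rfl

theorem tensorSubstitute_outerProduct (p : Fin K) (t : Fin M) (μ : Fin M → ℂ)
    (v : Fin K → Fin M → ℂ) :
    tensorSubstitute p t μ (outerProduct v) =
      outerProduct (update v p fun x => if x = t then 0 else v p x - μ x * v p t) := by
  ext idx
  rw [tensorSubstitute_apply]
  split_ifs with h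
  · exact (prod_eq_zero (mem_univ p) (by simp [h])).symm
  · simp only [outerProduct, Fintype.prod_eq_mul_prod_compl p, update_self, if_neg h]
    have hrest : ∀ i ∈ ({p}ᶜ : Finset (Fin K)),
        update v p (fun x => if x = t then 0 else v p x - μ x * v p t) i (idx i) = v i (idx i) ∧
          v i (update idx p t i) = v i (idx i) := fun i hi => by
      have hip : i ≠ p := by simpa using hi
      simp [hip]
    rw [prod_congr rfl fun i hi => (hrest i hi).1, prod_congr rfl fun i hi => (hrest i hi).2]
    ring

theorem exists_tensorRank_tensorSubstitute_add_one_le {T : (Fin K → Fin M) → ℂ}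
    {idx₀ : Fin K → Fin M} (p : Fin K) (hT : T idx₀ ≠ 0) :
    ∃ μ, tensorRank (tensorSubstitute p (idx₀ p) μ T) + 1 ≤ tensorRank T := by
  have : NeZero K := ⟨p.pos.ne'⟩
  obtain ⟨w, hw⟩ := exists_eq_sum_outerProduct T
  obtain ⟨s₀, -, hs₀⟩ : ∃ s₀ ∈ univ, outerProduct (w s₀) idx₀ ≠ 0 := by
    by_contra! h
    exact hT (by rw [hw, Finset.sum_apply]; exact sum_eq_zero h)
  have hpivot : w s₀ p (idx₀ p) ≠ 0 := prod_ne_zero_iff.mp hs₀ p (mem_univ p)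
  set t := idx₀ p
  set μ := fun x => w s₀ p x / w s₀ p t
  set w' := fun s => update (w s) p fun x => if x = t then 0 else w s p x - μ x * w s p t
  have hkill : outerProduct (w' s₀) = 0 := by
    ext idx
    refine prod_eq_zero (mem_univ p) ?_
    simp [w', μ, div_mul_cancel₀ _ hpivot]
  refine ⟨μ, ?_⟩
  have hle : tensorRank (tensorSubstitute p t μ T) ≤ #(univ.erase s₀) := by
    refine tensorRank_le_card _ w' ?_
    rw [sum_erase (f := fun s => outerProduct (w' s)) _ hkill]
    exact (congrArg _ hw).trans ((map_sum _ _ _).trans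
      (sum_congr rfl fun s _ => tensorSubstitute_outerProduct p t μ (w s)))
  rw [card_erase_of_mem (mem_univ s₀), card_univ, Fintype.card_fin] at hle
  have := s₀.pos
  omega

def tensorAvoid (t : Fin M) : ((Fin K → Fin M) → ℂ) →ₗ[ℂ] ((Fin K → Fin M) → ℂ) where
  toFun T idx := if ∀ p, idx p ≠ t then T idx else 0
  map_add' T T' := by ext idx; dsimp only [Pi.add_apply]; split_ifs <;> simp
  map_smul' c T := by
    ext idx; dsimp only [Pi.smul_apply, smul_eq_mul, RingHom.id_apply]; split_ifs <;> simp

theorem tensorAvoid_apply (t : Fin M) (T : (Fin K → Fin M) → ℂ) (idx : Fin K → Fin M) :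
    tensorAvoid t T idx = if ∀ p, idx p ≠ t then T idx else 0 :=
  rfl

theorem tensorAvoid_outerProduct (t : Fin M) (v : Fin K → Fin M → ℂ) :
    tensorAvoid t (outerProduct v) = outerProduct fun i x => if x = t then 0 else v i x := by
  ext idx
  rw [tensorAvoid_apply]
  split_ifs with h
  · exact prod_congr rfl fun i _ => (if_neg (h i)).symm
  · push Not at h
    obtain ⟨p, hp⟩ := h
    exact (Finset.prod_eq_zero (mem_univ p) (by simp [hp])).symm

theorem tensorRank_tensorAvoid_le [NeZero K] (t : Fin M) (T : (Fin K → Fin M) → ℂ) :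
    tensorRank (tensorAvoid t T) ≤ tensorRank T := by
  obtain ⟨w, hw⟩ := exists_eq_sum_outerProduct T
  simpa using tensorRank_le_card univ (fun s i x => if x = t then 0 else w s i x)
    ((congrArg _ hw).trans ((map_sum _ _ _).trans
      (sum_congr rfl fun s _ => tensorAvoid_outerProduct t (w s))))

end Substitution

section WPairs

open Finset Function

variable {K M : ℕ} [NeZero M]

def idxOn (P : Finset (Fin K)) (t : Fin M) : Fin K → Fin M := fun p => if p ∈ P then t else 0

theorem idxOn_ne {t t' : Fin M} (ht : t ≠ 0) (htt' : t' ≠ t) (P : Finset (Fin K)) (p : Fin K) :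
    idxOn P t' p ≠ t := by
  unfold idxOn; split_ifs <;> [exact htt'; exact ht.symm]

/-- For the tensor of a form, `pair_left` and `pair_right` say that `x₀^(K-2) x_t²` occurs,
`triple` that `x₀^(K-3) x_t³` does not, and `mixed` that no monomial involves two variables
other than `x₀`. -/
structure HasWPairs (i j l : Fin K) (S : Finset (Fin M)) (T : (Fin K → Fin M) → ℂ) : Prop where
  ne_zero : ∀ t ∈ S, t ≠ 0
  pair_left : ∀ t ∈ S, T (idxOn {i, l} t) ≠ 0
  pair_right : ∀ t ∈ S, T (idxOn {j, l} t) ≠ 0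
  triple : ∀ t ∈ S, T (idxOn {i, j, l} t) = 0
  mixed : ∀ idx p p', p ≠ i → p ≠ j → idx p ≠ 0 → idx p' ≠ 0 → idx p' ≠ idx p → T idx = 0

variable {i j l : Fin K} {S : Finset (Fin M)} {T : (Fin K → Fin M) → ℂ}

/-- The substitutions only bring in entries with the value `t` at mode `i` or `j`; by `mixed`
these vanish as soon as a mode other than `i`, `j` carries a nonzero value other than `t`. -/
theorem HasWPairs.tensorAvoid_tensorSubstitute_apply (h : HasWPairs i j l S T) (hij : i ≠ j)
    {t : Fin M} (ht : t ≠ 0) (μ ν : Fin M → ℂ) (idx : Fin K → Fin M) (hidx : ∀ p, idx p ≠ t)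
    {p : Fin K} (hpi : p ≠ i) (hpj : p ≠ j) (hp : idx p ≠ 0) :
    tensorAvoid t (tensorSubstitute j t ν (tensorSubstitute i t μ T)) idx = T idx := by
  have hzero : ∀ idx' : Fin K → Fin M, idx' p = idx p → (idx' i = t ∨ idx' j = t) →
      T idx' = 0 := fun idx' hp' hit => by
    rcases hit with hit | hit
    · exact h.mixed idx' p i hpi hpj (hp' ▸ hp) (hit ▸ ht) (hit ▸ hp' ▸ (hidx p).symm)
    · exact h.mixed idx' p j hpi hpj (hp' ▸ hp) (hit ▸ ht) (hit ▸ hp' ▸ (hidx p).symm)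
  have hji : update idx j t i ≠ t := by rw [update_of_ne hij]; exact hidx i
  rw [tensorAvoid_apply, if_pos hidx, tensorSubstitute_apply, if_neg (hidx j),
    tensorSubstitute_apply, tensorSubstitute_apply, if_neg (hidx i), if_neg hji,
    hzero (update idx i t) (update_of_ne hpi ..) (.inl (update_self ..)),
    hzero (update idx j t) (update_of_ne hpj ..) (.inr (update_self ..)),
    hzero (update (update idx j t) i t) (by rw [update_of_ne hpi, update_of_ne hpj])
      (.inl (update_self ..))]
  ring

theorem HasWPairs.exists_two_add_tensorRank_le {t : Fin M} (h : HasWPairs i j l (insert t S) T)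
    (htS : t ∉ S) (hij : i ≠ j) (hil : i ≠ l) (hjl : j ≠ l) :
    ∃ T', HasWPairs i j l S T' ∧ tensorRank T' + 2 ≤ tensorRank T := by
  have : NeZero K := ⟨i.pos.ne'⟩
  have ht : t ≠ 0 := h.ne_zero t (mem_insert_self t S)
  obtain ⟨μ, hμ⟩ := exists_tensorRank_tensorSubstitute_add_one_le i
    (h.pair_left t (mem_insert_self t S))
  rw [show idxOn {i, l} t i = t by simp [idxOn]] at hμ
  -- `triple` keeps the pivot of mode `j` alive through the substitution in mode `i`.
  have hpair : tensorSubstitute i t μ T (idxOn {j, l} t) ≠ 0 := by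
    have htriple : update (idxOn {j, l} t) i t = idxOn {i, j, l} t := by
      ext p; by_cases hp : p = i <;> simp [idxOn, hp]
    rw [tensorSubstitute_apply, if_neg (by simp [idxOn, hij, hil, ht.symm]), htriple,
      h.triple t (mem_insert_self t S), mul_zero, sub_zero]
    exact h.pair_right t (mem_insert_self t S)
  obtain ⟨ν, hν⟩ := exists_tensorRank_tensorSubstitute_add_one_le j hpair
  rw [show idxOn {j, l} t j = t by simp [idxOn]] at hν
  set T' := tensorAvoid t (tensorSubstitute j t ν (tensorSubstitute i t μ T))
  have hS : ∀ t' ∈ S, t' ≠ t := fun t' ht' htt' => htS (htt' ▸ ht')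
  have hT' : ∀ P t', l ∈ P → t' ∈ S → T' (idxOn P t') = T (idxOn P t') := fun P t' hl ht' =>
    h.tensorAvoid_tensorSubstitute_apply hij ht μ ν _ (idxOn_ne ht (hS t' ht') P) hil.symm
      hjl.symm (by simpa [idxOn, hl] using h.ne_zero t' (mem_insert_of_mem ht'))
  refine ⟨T', ⟨fun t' ht' => ?_, fun t' ht' => ?_, fun t' ht' => ?_, fun t' ht' => ?_,
    fun idx p p' hpi hpj hp hp' hpp' => ?_⟩, ?_⟩
  · exact h.ne_zero t' (mem_insert_of_mem ht')
  · rw [hT' _ t' (by simp) ht']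
    exact h.pair_left t' (mem_insert_of_mem ht')
  · rw [hT' _ t' (by simp) ht']
    exact h.pair_right t' (mem_insert_of_mem ht')
  · rw [hT' _ t' (by simp) ht']
    exact h.triple t' (mem_insert_of_mem ht')
  · by_cases hidx : ∀ q, idx q ≠ t
    · exact (h.tensorAvoid_tensorSubstitute_apply hij ht μ ν idx hidx hpi hpj hp).trans
        (h.mixed idx p p' hpi hpj hp hp' hpp')
    · exact if_neg hidx
  · have : tensorRank T' ≤ _ := tensorRank_tensorAvoid_le t _
    omega

theorem HasWPairs.two_mul_card_le_tensorRank (h : HasWPairs i j l S T) (hij : i ≠ j)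
    (hil : i ≠ l) (hjl : j ≠ l) : 2 * #S ≤ tensorRank T := by
  induction S using Finset.induction_on generalizing T with
  | empty => simp
  | insert t S htS ih =>
    obtain ⟨T', hT', hrank⟩ := h.exists_two_add_tensorRank_le htS hij hil hjl
    have := ih hT'
    rw [card_insert_of_notMem htS]
    omega

end WPairs

section IteratedPDeriv

open Finset Finsupp

variable {σ R : Type*} [CommSemiring R]

theorem Multiset.toFinsupp_coe_cons [DecidableEq σ] (i : σ) (l : List σ) :
    Multiset.toFinsupp ((i :: l : List σ) : Multiset σ) =
      Multiset.toFinsupp (l : Multiset σ) + single i 1 := by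
  rw [← Multiset.cons_coe, ← Multiset.singleton_add, Multiset.toFinsupp_add,
    Multiset.toFinsupp_singleton, add_comm]

theorem coeff_foldl_pderiv [DecidableEq σ] [Fintype σ] (l : List σ) (P : MvPolynomial σ R)
    (m : σ →₀ ℕ) :
    coeff m (l.foldl (fun p i => pderiv i p) P) =
      coeff (m + Multiset.toFinsupp (l : Multiset σ)) P *
        ∏ v, (((m + Multiset.toFinsupp (l : Multiset σ)) v).descFactorial
          (Multiset.toFinsupp (l : Multiset σ) v) : R) := by
  induction l generalizing P with
  | nil => simp
  | cons i l ih =>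
    set c := Multiset.toFinsupp (l : Multiset σ)
    have hfactor : ∀ v, ((((m + c + single i 1 : σ →₀ ℕ) v).descFactorial
        ((c + single i 1 : σ →₀ ℕ) v) : ℕ) : R)
          = (if v = i then ((m + c) i + 1 : R) else 1) * ((m + c) v).descFactorial (c v) := by
      intro v
      by_cases hv : v = i
      · subst hv
        simp only [Finsupp.add_apply, single_eq_same, if_true, Nat.succ_descFactorial_succ]
        push_cast
        ring
      · simp [hv]
    rw [List.foldl_cons, ih, coeff_pderiv, Multiset.toFinsupp_coe_cons, ← add_assoc,
      Finset.prod_congr rfl fun v _ => hfactor v, prod_mul_distrib, Finset.prod_ite_eq']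
    simp only [mem_univ, if_true]
    ring

theorem MvPolynomial.IsHomogeneous.foldl_pderiv {P : MvPolynomial σ R} {n : ℕ}
    (hP : P.IsHomogeneous n) (l : List σ) :
    (l.foldl (fun p i => pderiv i p) P).IsHomogeneous (n - l.length) := by
  induction l generalizing P n with
  | nil => simpa using hP
  | cons i l ih => simpa [Nat.sub_sub, add_comm 1] using ih hP.pderiv

/-- By Euler's identity the degree-one form `∂^l P` takes the value `∂_o ∂^l P` at `e_o`. -/
theorem eval_single_foldl_pderiv [DecidableEq σ] [Fintype σ] (o : σ) (l : List σ)
    {P : MvPolynomial σ R} (hP : P.IsHomogeneous (l.length + 1)) :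
    eval (Pi.single o 1) (l.foldl (fun p i => pderiv i p) P) =
      coeff (Multiset.toFinsupp (l : Multiset σ) + single o 1) P *
        ∏ v, (((Multiset.toFinsupp (l : Multiset σ) + single o 1 : σ →₀ ℕ) v).factorial : R) := by
  set Q := l.foldl (fun p i => pderiv i p) P
  have hQ : Q.IsHomogeneous 1 := by simpa using hP.foldl_pderiv l
  have hconst : pderiv o Q = C (coeff 0 (pderiv o Q)) :=
    totalDegree_eq_zero_iff_eq_C.mp
      ((totalDegree_zero_iff_isHomogeneous σ).mpr (by simpa using hQ.pderiv))
  have hexp : Multiset.toFinsupp ((l ++ [o] : List σ) : Multiset σ) =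
      Multiset.toFinsupp (l : Multiset σ) + single o 1 := by
    rw [← Multiset.coe_add, Multiset.toFinsupp_add, Multiset.coe_singleton,
      Multiset.toFinsupp_singleton]
  calc eval (Pi.single o 1) Q = eval (Pi.single o 1) (∑ v, X v * pderiv v Q) := by
        rw [hQ.sum_X_mul_pderiv, one_smul]
    _ = eval (Pi.single o 1) (pderiv o Q) := by simp [map_sum, Pi.single_apply]
    _ = coeff 0 ((l ++ [o]).foldl (fun p i => pderiv i p) P) := by
        conv_lhs => rw [hconst]
        rw [eval_C, List.foldl_append]
        rfl
    _ = _ := by simp only [coeff_foldl_pderiv, zero_add, hexp, Nat.descFactorial_self]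

end IteratedPDeriv

section HessianTensor

open Finset Finsupp

variable {σ : Type*} [DecidableEq σ]

theorem Multiset.toFinsupp_coe_ofFn_apply {K : ℕ} (f : Fin K → σ) (v : σ) :
    Multiset.toFinsupp (List.ofFn f : Multiset σ) v = #{p | f p = v} := by
  rw [Multiset.toFinsupp_apply, ← Fin.univ_val_map, Multiset.count_map]
  simp [Finset.card, Finset.filter_val, eq_comm]

theorem Multiset.toFinsupp_coe_ofFn_idxOn {K M : ℕ} [NeZero M] (P : Finset (Fin K))
    {t : Fin M} (ht : t ≠ 0) :
    Multiset.toFinsupp (List.ofFn (idxOn P t) : Multiset (Fin M)) =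
      single t #P + single 0 (K - #P) := by
  ext v
  rw [Multiset.toFinsupp_coe_ofFn_apply, Finsupp.add_apply, single_apply, single_apply]
  by_cases hvt : t = v
  · subst hvt
    simp [idxOn, ht.symm]
  · by_cases hv0 : v = 0
    · subst hv0
      simp [idxOn, hvt, Finset.filter_not, card_univ_sdiff]
    · rw [if_neg hvt, if_neg (Ne.symm hv0), add_zero, Finset.card_eq_zero, filter_eq_empty_iff]
      intro p _
      unfold idxOn
      split_ifs
      exacts [hvt, Ne.symm hv0]

theorem HF_apply_eq_zero_iff [Fintype σ] {k : ℕ} {F : MvPolynomial σ ℂ}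
    (hF : F.IsHomogeneous (k + 1)) (o : σ) (idx : Fin k → σ) :
    HF k F (Pi.single o 1) idx = 0 ↔
      coeff (Multiset.toFinsupp (List.ofFn idx : Multiset σ) + single o 1) F = 0 := by
  rw [HF, eval_single_foldl_pderiv o _ (by simpa using hF), mul_eq_zero,
    or_iff_left (Finset.prod_ne_zero_iff.mpr fun v _ =>
      Nat.cast_ne_zero.mpr (Nat.factorial_ne_zero _))]

theorem HF_idxOn_eq_zero_iff {K M : ℕ} [NeZero M] {F : MvPolynomial (Fin M) ℂ}
    (hF : F.IsHomogeneous (K + 1)) (P : Finset (Fin K)) {t : Fin M} (ht : t ≠ 0) :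
    HF K F (Pi.single 0 1) (idxOn P t) = 0 ↔ coeff (single t #P + single 0 (K + 1 - #P)) F = 0 := by
  have hP : #P ≤ K := by simpa using P.card_le_univ
  rw [HF_apply_eq_zero_iff hF, Multiset.toFinsupp_coe_ofFn_idxOn P ht, add_assoc, ← single_add,
    Nat.sub_add_comm hP]

end HessianTensor

section NormalForm

open Finset Finsupp

theorem MvPolynomial.coeff_C_mul_X_pow_mul {σ R : Type*} [CommSemiring R] [DecidableEq σ]
    (o : σ) (c : R) (k : ℕ) (P : MvPolynomial σ R) (d : σ →₀ ℕ) :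
    coeff d (C c * X o ^ k * P) = if k ≤ d o then c * coeff (d - single o k) P else 0 := by
  rw [C_mul_X_pow_eq_monomial, coeff_monomial_mul']
  exact if_congr single_le_iff rfl rfl

theorem MvPolynomial.coeff_rename_succ_eq_zero {R : Type*} [CommSemiring R] {b : ℕ}
    (G : MvPolynomial (Fin b) R) {d : Fin (b + 1) →₀ ℕ} (hd : d 0 ≠ 0) :
    coeff d (rename Fin.succ G) = 0 :=
  coeff_rename_eq_zero _ _ _ fun _ hu => absurd (hu ▸ mapDomain_of_notMem_range _ _
    fun ⟨j, hj⟩ => Fin.succ_ne_zero j hj) hd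

theorem MvPolynomial.IsHomogeneous.coeff_eq_zero_of_ne {σ R : Type*} [CommSemiring R] [Fintype σ]
    {P : MvPolynomial σ R} (hP : P.IsHomogeneous 1) {d : σ →₀ ℕ} {v w : σ} (hvw : v ≠ w)
    (hv : d v ≠ 0) (hw : d w ≠ 0) : coeff d P = 0 := by
  refine hP.coeff_eq_zero fun h => ?_
  have := Finset.add_le_sum (f := fun i => d i) (fun _ _ => Nat.zero_le _) (mem_univ v)
    (mem_univ w) hvw
  rw [← degree_eq_sum, h] at this
  omega

theorem MvPolynomial.coeff_sum_X_pow_eq_zero {σ ι R : Type*} [CommSemiring R] [DecidableEq σ]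
    (s : ι → σ) (S : Finset ι) (k : ℕ) {d : σ →₀ ℕ} {v w : σ} (hvw : v ≠ w) (hv : d v ≠ 0)
    (hw : d w ≠ 0) : coeff d (∑ i ∈ S, X (s i) ^ k : MvPolynomial σ R) = 0 := by
  rw [coeff_sum]
  refine sum_eq_zero fun i _ => ?_
  rw [coeff_X_pow, if_neg]
  rintro rfl
  exact hvw ((single_apply_ne_zero.mp hv).1.trans (single_apply_ne_zero.mp hw).1.symm)

theorem MvPolynomial.coeff_single_sum_X_pow {σ ι R : Type*} [CommSemiring R] [DecidableEq σ]
    [Fintype ι] {s : ι → σ} (hs : Function.Injective s) (i : ι) {k : ℕ} (hk : k ≠ 0) :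
    coeff (single (s i) k) (∑ i, X (s i) ^ k : MvPolynomial σ R) = 1 := by
  rw [coeff_sum, Finset.sum_eq_single i]
  · rw [coeff_X_pow, if_pos rfl]
  · intro i' _ hi'
    rw [coeff_X_pow, if_neg (fun h => hi' (hs (single_left_injective hk h)))]
  · simp

/-- The form `F` of the statement. -/
noncomputable def normalForm (b n q : ℕ) (hqb : q ≤ b) (a : ℂ) (L G : MvPolynomial (Fin b) ℂ) :
    MvPolynomial (Fin (b + 1)) ℂ :=
  C (a / (Nat.factorial n : ℂ)) * X 0 ^ n
    + C (1 / (Nat.factorial (n - 1) : ℂ)) * X 0 ^ (n - 1) * rename Fin.succ L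
    + C (1 / (2 * (Nat.factorial (n - 2) : ℂ))) * X 0 ^ (n - 2)
        * (∑ i : Fin q, X ((Fin.castLE hqb i).succ) ^ 2)
    + rename Fin.succ G

variable {b n q : ℕ} {hqb : q ≤ b} {a : ℂ} {L G : MvPolynomial (Fin b) ℂ}

theorem normalForm_isHomogeneous (hn : 2 ≤ n) (hL : L.IsHomogeneous 1) (hG : G.IsHomogeneous n) :
    (normalForm b n q hqb a L G).IsHomogeneous n := by
  have hQ : IsHomogeneous (∑ i : Fin q, X ((Fin.castLE hqb i).succ) ^ 2 :
      MvPolynomial (Fin (b + 1)) ℂ) 2 :=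
    IsHomogeneous.sum _ _ _ fun i _ => isHomogeneous_X_pow _ _
  have hlin := (isHomogeneous_C_mul_X_pow (1 / (Nat.factorial (n - 1) : ℂ)) 0 (n - 1)).mul
    (hL.rename_isHomogeneous (f := Fin.succ))
  have hquad := (isHomogeneous_C_mul_X_pow (1 / (2 * (Nat.factorial (n - 2) : ℂ))) 0 (n - 2)).mul hQ
  rw [Nat.sub_add_cancel (by omega)] at hlin hquad
  exact (((isHomogeneous_C_mul_X_pow _ _ _).add hlin).add hquad).add hG.rename_isHomogeneous

theorem coeff_normalForm_eq_zero_of_ne (hL : L.IsHomogeneous 1) {d : Fin (b + 1) →₀ ℕ}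
    (hd0 : d 0 ≠ 0) {v w : Fin (b + 1)} (hv0 : v ≠ 0) (hw0 : w ≠ 0) (hvw : v ≠ w) (hv : d v ≠ 0)
    (hw : d w ≠ 0) : coeff d (normalForm b n q hqb a L G) = 0 := by
  have hsub : ∀ k u, u ≠ 0 → (d - single 0 k : Fin (b + 1) →₀ ℕ) u = d u := fun k u hu => by
    rw [tsub_apply, single_eq_of_ne hu, tsub_zero]
  have hpure : single 0 n ≠ d := fun h => hv (by rw [← h, single_eq_of_ne hv0])
  have hlin : coeff (d - single 0 (n - 1)) (rename Fin.succ L) = 0 :=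
    hL.rename_isHomogeneous.coeff_eq_zero_of_ne hvw (by rwa [hsub _ _ hv0])
      (by rwa [hsub _ _ hw0])
  have hquad : coeff (d - single 0 (n - 2))
      (∑ i : Fin q, X ((Fin.castLE hqb i).succ) ^ 2 : MvPolynomial (Fin (b + 1)) ℂ) = 0 :=
    coeff_sum_X_pow_eq_zero _ _ _ hvw (by rwa [hsub _ _ hv0]) (by rwa [hsub _ _ hw0])
  rw [normalForm, coeff_add, coeff_add, coeff_add, coeff_C_mul, coeff_X_pow, if_neg hpure,
    coeff_C_mul_X_pow_mul, coeff_C_mul_X_pow_mul, hlin, hquad, coeff_rename_succ_eq_zero _ hd0]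
  simp

theorem coeff_normalForm_single_two (hn : 3 ≤ n) (i : Fin q) :
    coeff (single (Fin.castLE hqb i).succ 2 + single 0 (n - 2)) (normalForm b n q hqb a L G) =
      1 / (2 * (Nat.factorial (n - 2) : ℂ)) := by
  set t := (Fin.castLE hqb i).succ
  have ht : t ≠ 0 := Fin.succ_ne_zero _
  have hd0 : (single t 2 + single 0 (n - 2) : Fin (b + 1) →₀ ℕ) 0 = n - 2 := by
    rw [Finsupp.add_apply, single_eq_of_ne ht.symm, single_eq_same, zero_add]
  have hpure : single 0 n ≠ single t 2 + single 0 (n - 2) := fun h => by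
    have := congrArg (· t) h
    simp only [Finsupp.add_apply, single_eq_same, single_eq_of_ne ht] at this
    omega
  have hquad : coeff (single t 2)
      (∑ i : Fin q, X ((Fin.castLE hqb i).succ) ^ 2 : MvPolynomial (Fin (b + 1)) ℂ) = 1 :=
    coeff_single_sum_X_pow (Fin.succ_injective _ |>.comp (Fin.castLE_injective hqb)) i two_ne_zero
  rw [normalForm, coeff_add, coeff_add, coeff_add, coeff_C_mul, coeff_X_pow, if_neg hpure,
    coeff_C_mul_X_pow_mul, coeff_C_mul_X_pow_mul, hd0, if_neg (by omega), if_pos le_rfl,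
    add_tsub_cancel_right, hquad, coeff_rename_succ_eq_zero _ (by rw [hd0]; omega)]
  simp

theorem coeff_normalForm_single_three (hn : 4 ≤ n) {t : Fin (b + 1)} (ht : t ≠ 0) :
    coeff (single t 3 + single 0 (n - 3)) (normalForm b n q hqb a L G) = 0 := by
  have hd0 : (single t 3 + single 0 (n - 3) : Fin (b + 1) →₀ ℕ) 0 = n - 3 := by
    rw [Finsupp.add_apply, single_eq_of_ne ht.symm, single_eq_same, zero_add]
  have hpure : single 0 n ≠ single t 3 + single 0 (n - 3) := fun h => by
    have := congrArg (· t) h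
    simp only [Finsupp.add_apply, single_eq_same, single_eq_of_ne ht] at this
    omega
  rw [normalForm, coeff_add, coeff_add, coeff_add, coeff_C_mul, coeff_X_pow, if_neg hpure,
    coeff_C_mul_X_pow_mul, coeff_C_mul_X_pow_mul, hd0, if_neg (by omega), if_neg (by omega),
    coeff_rename_succ_eq_zero _ (by rw [hd0]; omega)]
  simp

end NormalForm

section HessianOfNormalForm

open Finset Finsupp

theorem hasWPairs_HF_normalForm {b n q : ℕ} (hn : 4 ≤ n) (hqb : q ≤ b) (a : ℂ)
    {L G : MvPolynomial (Fin b) ℂ} (hL : L.IsHomogeneous 1) (hG : G.IsHomogeneous n) :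
    HasWPairs (⟨0, by omega⟩ : Fin (n - 1)) ⟨1, by omega⟩ ⟨2, by omega⟩
      (univ.image fun i : Fin q => (Fin.castLE hqb i).succ)
      (HF (n - 1) (normalForm b n q hqb a L G) (Pi.single 0 1)) := by
  have hF : (normalForm b n q hqb a L G).IsHomogeneous (n - 1 + 1) := by
    rw [Nat.sub_add_cancel (by omega)]
    exact normalForm_isHomogeneous (by omega) hL hG
  have hpair : ∀ P : Finset (Fin (n - 1)), #P = 2 → ∀ t ∈ univ.image fun i : Fin q =>
      (Fin.castLE hqb i).succ, HF (n - 1) (normalForm b n q hqb a L G) (Pi.single 0 1)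
        (idxOn P t) ≠ 0 := fun P hP => forall_mem_image.mpr fun i _ => by
    rw [Ne, HF_idxOn_eq_zero_iff hF P (Fin.succ_ne_zero _), hP, show n - 1 + 1 - 2 = n - 2 by omega,
      coeff_normalForm_single_two (by omega)]
    simp [Nat.factorial_ne_zero]
  refine ⟨forall_mem_image.mpr fun i _ => Fin.succ_ne_zero _, hpair _ (by simp),
    hpair _ (by simp), forall_mem_image.mpr fun i _ => ?_, fun idx p p' _ _ hp hp' hpp' => ?_⟩
  · rw [HF_idxOn_eq_zero_iff hF _ (Fin.succ_ne_zero _), (by simp : #_ = 3),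
      show n - 1 + 1 - 3 = n - 3 by omega, coeff_normalForm_single_three hn (Fin.succ_ne_zero _)]
  · have hmem : ∀ p, (Multiset.toFinsupp (List.ofFn idx : Multiset (Fin (b + 1))) +
        single 0 1 : Fin (b + 1) →₀ ℕ) (idx p) ≠ 0 := fun p => by
      rw [Finsupp.add_apply, Multiset.toFinsupp_coe_ofFn_apply]
      exact (Nat.add_pos_left (card_pos.mpr ⟨p, by simp⟩) _).ne'
    rw [HF_apply_eq_zero_iff hF]
    exact coeff_normalForm_eq_zero_of_ne hL (by simp) hp hp' hpp'.symm (hmem p) (hmem p')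

end HessianOfNormalForm

theorem stmt_10_general (b n q : ℕ) (hn : 4 ≤ n) (hqb : q ≤ b) (a : ℂ)
    (L : MvPolynomial (Fin b) ℂ) (hL : L.IsHomogeneous 1)
    (G : MvPolynomial (Fin b) ℂ) (hG : G.IsHomogeneous n) :
    2 * q ≤ tensorRank (HF (n - 1)
      (C (a / (Nat.factorial n : ℂ)) * X 0 ^ n
        + C (1 / (Nat.factorial (n - 1) : ℂ)) * X 0 ^ (n - 1) * rename Fin.succ L
        + C (1 / (2 * (Nat.factorial (n - 2) : ℂ))) * X 0 ^ (n - 2)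
            * (∑ i : Fin q, X ((Fin.castLE hqb i).succ) ^ 2)
        + rename Fin.succ G)
      (Pi.single (0 : Fin (b + 1)) 1)) := by
  have hinj : Function.Injective fun i : Fin q => (Fin.castLE hqb i).succ :=
    (Fin.succ_injective _).comp (Fin.castLE_injective hqb)
  have hcard : (Finset.univ.image fun i : Fin q => (Fin.castLE hqb i).succ).card = q := by
    rw [Finset.card_image_of_injective _ hinj, Finset.card_univ, Fintype.card_fin]
  have := (hasWPairs_HF_normalForm hn hqb a hL hG).two_mul_card_le_tensorRank
    (by simp [Fin.ext_iff]) (by simp [Fin.ext_iff]) (by simp [Fin.ext_iff])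
  rwa [hcard] at this

/-- Let `n ≥ 4`, `a ∈ ℂ`, `L` a linear form in `x_1, …, x_b`, `1 ≤ q ≤ b`, and
`F = (a/n!)·x_0^n + (1/(n-1)!)·x_0^{n-1}·L + (1/(2(n-2)!))·x_0^{n-2}·(x_1^2 + ⋯ + x_q^2)
+ G(x_1, …, x_b)` with `G` a form of degree `n` not involving `x_0`.
Then `rk 𝓗_F(e_0) ≥ 2q`. -/
theorem stmt_10 (b n q : ℕ) (hn : 4 ≤ n) (hq1 : 1 ≤ q) (hqb : q ≤ b) (a : ℂ)
    (L : MvPolynomial (Fin b) ℂ) (hL : L.IsHomogeneous 1)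
    (G : MvPolynomial (Fin b) ℂ) (hG : G.IsHomogeneous n) :
    2 * q ≤ tensorRank (HF (n - 1)
      (C (a / (Nat.factorial n : ℂ)) * X 0 ^ n
        + C (1 / (Nat.factorial (n - 1) : ℂ)) * X 0 ^ (n - 1) * rename Fin.succ L
        + C (1 / (2 * (Nat.factorial (n - 2) : ℂ))) * X 0 ^ (n - 2)
            * (∑ i : Fin q, X ((Fin.castLE hqb i).succ) ^ 2)
        + rename Fin.succ G)
      (Pi.single (0 : Fin (b + 1)) 1)) :=
  stmt_10_general b n q hn hqb a L hL G hG
end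

section
/- For every a ∈ ℂ, the 2×2×2 tensor T over ℂ with slices T(0,·,·) = [[a, 1], [1, 0]] and T(1,·,·) = [[1, 0], [0, 0]] has rank exactly 3. -/
section TensorRank

variable {l m n : ℕ}

lemma isRankOne3_outer {u : Fin l → ℂ} {v : Fin m → ℂ} {w : Fin n → ℂ}
    (hu : u ≠ 0) (hv : v ≠ 0) (hw : w ≠ 0) :
    IsRankOne3 (fun i j k => u i * v j * w k) := by
  obtain ⟨i, hi⟩ := Function.ne_iff.mp hu
  obtain ⟨j, hj⟩ := Function.ne_iff.mp hv
  obtain ⟨k, hk⟩ := Function.ne_iff.mp hw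
  refine ⟨fun h => ?_, u, v, w, fun _ _ _ => rfl⟩
  have := congrFun (congrFun (congrFun h i) j) k
  simp_all

lemma tensorRank3_le {r : ℕ} {T : Fin l → Fin m → Fin n → ℂ}
    {f : Fin r → Fin l → Fin m → Fin n → ℂ} (hf : ∀ t, IsRankOne3 (f t)) (hT : T = ∑ t, f t) :
    tensorRank3 T ≤ r :=
  Nat.sInf_le ⟨f, hf, hT⟩

lemma exists_sum_isRankOne3_of_tensorRank3 {r : ℕ} {T : Fin l → Fin m → Fin n → ℂ}
    {f : Fin r → Fin l → Fin m → Fin n → ℂ} (hf : ∀ t, IsRankOne3 (f t)) (hT : T = ∑ t, f t) :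
    ∃ g : Fin (tensorRank3 T) → Fin l → Fin m → Fin n → ℂ,
      (∀ t, IsRankOne3 (g t)) ∧ T = ∑ t, g t := by
  unfold tensorRank3
  exact Nat.sInf_mem (s := {r | ∃ g : Fin r → Fin l → Fin m → Fin n → ℂ,
    (∀ t, IsRankOne3 (g t)) ∧ T = ∑ t, g t}) ⟨r, f, hf, hT⟩

lemma exists_sum_outer_of_sum_isRankOne3 {r s : ℕ} (hrs : r ≤ s)
    {f : Fin r → Fin l → Fin m → Fin n → ℂ} (hf : ∀ t, IsRankOne3 (f t)) :
    ∃ (u : Fin s → Fin l → ℂ) (v : Fin s → Fin m → ℂ) (w : Fin s → Fin n → ℂ),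
      ∀ i j k, (∑ t, f t) i j k = ∑ t, u t i * v t j * w t k := by
  choose u v w huvw using fun t => (hf t).2
  have hinj := Fin.castLE_injective hrs
  refine ⟨Function.extend (Fin.castLE hrs) u 0, Function.extend (Fin.castLE hrs) v 0,
    Function.extend (Fin.castLE hrs) w 0, fun i j k => ?_⟩
  simp only [Finset.sum_apply, huvw]
  refine Fintype.sum_of_injective _ hinj _ _ (fun t ht => ?_) (fun t => ?_)
  · simp [Function.extend_apply' _ _ _ ht]
  · simp [hinj.extend_apply]

end TensorRank

section Example

variable (a : ℂ)

lemma det_slice_combination_eq_zero {T : Fin 2 → Fin 2 → Fin 2 → ℂ}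
    {u v w : Fin 2 → Fin 2 → ℂ} (hT : ∀ i j k, T i j k = ∑ t, u t i * v t j * w t k) (t : Fin 2) :
    (u t 1 • Matrix.of (T 0) - u t 0 • Matrix.of (T 1)).det = 0 := by
  fin_cases t <;>
  · simp only [Fin.zero_eta, Fin.mk_one, Matrix.smul_of, Matrix.of_sub_of, Matrix.det_fin_two,
      Matrix.of_apply, Pi.sub_apply, Pi.smul_apply, hT, Fin.sum_univ_two, smul_eq_mul]
    ring

def exampleTensor : Fin 2 → Fin 2 → Fin 2 → ℂ :=
  fun i j k => ![![![a, 1], ![1, 0]], ![![1, 0], ![0, 0]]] i j k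

lemma det_exampleTensor_slice_combination (x y : ℂ) :
    (y • Matrix.of (exampleTensor a 0) - x • Matrix.of (exampleTensor a 1)).det = -y ^ 2 := by
  simp [Matrix.det_fin_two, exampleTensor, sq]

lemma exampleTensor_not_sum_two_outer (u v w : Fin 2 → Fin 2 → ℂ) :
    ¬ ∀ i j k, exampleTensor a i j k = ∑ t, u t i * v t j * w t k := by
  intro hT
  have hu : ∀ t, u t 1 = 0 := fun t => by
    have hdet := det_slice_combination_eq_zero hT t
    rwa [det_exampleTensor_slice_combination, neg_eq_zero, pow_eq_zero_iff two_ne_zero] at hdet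
  simpa [exampleTensor, hu] using hT 1 0 0

lemma exampleTensor_eq_sum_isRankOne3 :
    ∃ f : Fin 3 → Fin 2 → Fin 2 → Fin 2 → ℂ, (∀ t, IsRankOne3 (f t)) ∧
      exampleTensor a = ∑ t, f t := by
  refine ⟨![fun i j k => ![1, 0] i * ![1, 0] j * ![a, 1] k,
    fun i j k => ![1, 0] i * ![0, 1] j * ![1, 0] k,
    fun i j k => ![0, 1] i * ![1, 0] j * ![1, 0] k], fun t => ?_, ?_⟩
  · fin_cases t <;> exact isRankOne3_outer (by simp) (by simp) (by simp)
  · funext i j k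
    fin_cases i <;> fin_cases j <;> fin_cases k <;> simp [exampleTensor, Fin.sum_univ_three]

end Example

/-- For every `a ∈ ℂ`, the `2 × 2 × 2` tensor with slices
`[[a, 1], [1, 0]]` and `[[1, 0], [0, 0]]` has rank exactly `3`. -/
theorem stmt_13 (a : ℂ) :
    tensorRank3 (fun i j k => ![![![a, 1], ![1, 0]], ![![1, 0], ![0, 0]]] i j k) = 3 := by
  change tensorRank3 (exampleTensor a) = 3
  obtain ⟨f, hf, hT⟩ := exampleTensor_eq_sum_isRankOne3 a
  refine le_antisymm (tensorRank3_le hf hT) (not_lt.mp fun hlt => ?_)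
  obtain ⟨g, hg, hgT⟩ := exists_sum_isRankOne3_of_tensorRank3 hf hT
  obtain ⟨u, v, w, huvw⟩ := exists_sum_outer_of_sum_isRankOne3 (Nat.le_of_lt_succ hlt) hg
  exact exampleTensor_not_sum_two_outer a u v w (hgT ▸ huvw)
end
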